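/- Equivalence of nuclear-norm regularized matrix completion and its bilinear factorized form: let Z, W ∈ ℝ^{M×N}, μ ≥ 0, and P ≥ min(M, N). Then the infimum over C ∈ ℝ^{M×P} and B ∈ ℝ^{N×P} of (1/2)‖(Z − C Bᵀ) ⊙ W‖_F² + (μ/2)(‖B‖_F² + ‖C‖_F²) equals the infimum over A ∈ ℝ^{M×N} of (1/2)‖(Z − A) ⊙ W‖_F² + μ‖A‖_*. -/

import Mathlib

open Matrix

/-- Squared Frobenius norm of a real matrix: `∑_{i,j} M_{ij}²`. -/
def frobSq {m n : ℕ} (X : Matrix (Fin m) (Fin n) ℝ) : ℝ :=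
  ∑ i, ∑ j, (X i j) ^ 2

/-- Nuclear norm of a real matrix: the trace of the positive semidefinite
square root of `AᴴA = AᵀA` (i.e., the sum of singular values of `A`). -/
noncomputable def nuclearNorm {m n : ℕ} (A : Matrix (Fin m) (Fin n) ℝ) : ℝ :=
  ((Matrix.posSemidef_conjTranspose_mul_self A).1.eigenvectorUnitary.1 *
    diagonal ((√·) ∘ (Matrix.posSemidef_conjTranspose_mul_self A).1.eigenvalues) *
    (star (Matrix.posSemidef_conjTranspose_mul_self A).1.eigenvectorUnitary :
      Matrix (Fin n) (Fin n) ℝ)).trace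

/-!
Write `‖X‖_* = ∑ σⱼ`, where `(X V)ᵀ (X V) = diag (σ²)` for an orthogonal `V`.

If `X = C Bᵀ`, then `U = X V Σ⁻¹` is a partial isometry with `∑ σⱼ = tr ((Cᵀ U)ᵀ (Bᵀ V))`, and
AM–GM, Bessel's inequality `‖Cᵀ U‖_F ≤ ‖C‖_F` and `‖Bᵀ V‖_F = ‖B‖_F` give
`2 ‖C Bᵀ‖_* ≤ ‖B‖_F² + ‖C‖_F²`. Conversely, for `P ≥ N` the balanced factors `C = X V Σ^{-1/2} E`,
`B = V Σ^{1/2} E`, with `E` the isometric embedding of `ℝᴺ` into `ℝᴾ`, attain equality. Applied with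
`P = N` to `X` and `Xᵀ`, the two facts give `‖Xᵀ‖_* = ‖X‖_*`, so the case `P ≥ M` follows by
transposing. Hence each value of one objective is bounded below by a value of the other, and the
infima agree.
-/

section

variable {ι κ : Type*} [Fintype ι] [Fintype κ] [DecidableEq κ]

lemma transpose_mul_self_mul_diagonal {R : Type*} [CommSemiring R] {K : Matrix ι κ R}
    {d : κ → R} (hK : Kᵀ * K = diagonal d) (g : κ → R) :
    (K * diagonal g)ᵀ * (K * diagonal g) = diagonal (fun j => g j ^ 2 * d j) := by
  rw [transpose_mul, diagonal_transpose, Matrix.mul_assoc, ← Matrix.mul_assoc Kᵀ, hK,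
    diagonal_mul_diagonal, diagonal_mul_diagonal]
  congr 1; funext j; ring

lemma mul_diagonal_eq_self {K : Matrix ι κ ℝ} {d g : κ → ℝ} (hK : Kᵀ * K = diagonal d)
    (hg : ∀ j, d j ≠ 0 → g j = 1) : K * diagonal g = K := by
  ext i j
  rw [mul_diagonal]
  by_cases hd : d j = 0
  · have hcol : ∑ i, K i j ^ 2 = 0 := by
      simpa [mul_apply, sq, hd] using congrFun (congrFun hK j) j
    have hzero := (Finset.sum_eq_zero_iff_of_nonneg (fun i _ => sq_nonneg (K i j))).1 hcol i
      (Finset.mem_univ i)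
    rw [pow_eq_zero_iff two_ne_zero |>.1 hzero, zero_mul]
  · rw [hg j hd, mul_one]

end

section

variable {m n p : ℕ}

lemma frobSq_eq_trace (X : Matrix (Fin m) (Fin n) ℝ) : frobSq X = (Xᵀ * X).trace := by
  simp only [frobSq, trace, diag, mul_apply, transpose_apply, sq]
  exact Finset.sum_comm

lemma frobSq_nonneg (X : Matrix (Fin m) (Fin n) ℝ) : 0 ≤ frobSq X := by
  unfold frobSq; positivity

lemma frobSq_transpose (X : Matrix (Fin m) (Fin n) ℝ) : frobSq Xᵀ = frobSq X := by
  rw [frobSq_eq_trace, frobSq_eq_trace, transpose_transpose, trace_mul_comm]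

lemma frobSq_mul_of_mul_transpose_eq_one (X : Matrix (Fin m) (Fin n) ℝ)
    {E : Matrix (Fin n) (Fin p) ℝ} (hE : E * Eᵀ = 1) : frobSq (X * E) = frobSq X := by
  rw [frobSq_eq_trace, frobSq_eq_trace, transpose_mul, Matrix.mul_assoc, trace_mul_comm]
  simp only [Matrix.mul_assoc, hE, Matrix.mul_one]

lemma two_mul_trace_transpose_mul_le (X Y : Matrix (Fin m) (Fin n) ℝ) :
    2 * (Xᵀ * Y).trace ≤ frobSq X + frobSq Y := by
  have h := frobSq_nonneg (X - Y)
  rw [frobSq_eq_trace, transpose_sub, Matrix.sub_mul, Matrix.mul_sub, Matrix.mul_sub, trace_sub,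
    trace_sub, trace_sub, ← trace_transpose (Yᵀ * X), transpose_mul, transpose_transpose] at h
  rw [frobSq_eq_trace, frobSq_eq_trace]
  linarith

lemma frobSq_transpose_mul_le (C : Matrix (Fin m) (Fin p) ℝ) {U : Matrix (Fin m) (Fin n) ℝ}
    (hU : U * Uᵀ * U = U) : frobSq (Cᵀ * U) ≤ frobSq C := by
  have h := frobSq_nonneg ((1 - U * Uᵀ) * C)
  have hproj : (1 - U * Uᵀ)ᵀ * (1 - U * Uᵀ) = 1 - U * Uᵀ := by
    rw [transpose_sub, transpose_one, transpose_mul, transpose_transpose, Matrix.sub_mul,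
      Matrix.mul_sub, Matrix.mul_sub, Matrix.mul_one, Matrix.one_mul, Matrix.mul_one,
      ← Matrix.mul_assoc, hU]
    abel
  rw [frobSq_eq_trace, transpose_mul, Matrix.mul_assoc, ← Matrix.mul_assoc _ _ C, hproj,
    Matrix.sub_mul, Matrix.one_mul, Matrix.mul_sub, trace_sub] at h
  rw [frobSq_eq_trace, frobSq_eq_trace, transpose_mul, transpose_transpose, trace_mul_cycle]
  simp only [Matrix.mul_assoc] at h ⊢
  linarith

lemma frobSq_mul_diagonal {K : Matrix (Fin m) (Fin n) ℝ} {d : Fin n → ℝ}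
    (hK : Kᵀ * K = diagonal d) (g : Fin n → ℝ) :
    frobSq (K * diagonal g) = ∑ j, g j ^ 2 * d j := by
  rw [frobSq_eq_trace, transpose_mul_self_mul_diagonal hK, trace_diagonal]

lemma exists_right_singular_basis (X : Matrix (Fin m) (Fin n) ℝ) :
    ∃ V : Matrix (Fin n) (Fin n) ℝ, Vᵀ * V = 1 ∧ V * Vᵀ = 1 ∧
      ∃ σ : Fin n → ℝ, (∀ j, 0 ≤ σ j) ∧
        (X * V)ᵀ * (X * V) = diagonal (fun j => σ j ^ 2) ∧ nuclearNorm X = ∑ j, σ j := by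
  have hX := posSemidef_conjTranspose_mul_self X
  have hVV := Unitary.coe_star_mul_self hX.1.eigenvectorUnitary
  have hVV' := Unitary.coe_mul_star_self hX.1.eigenvectorUnitary
  have hdiag := hX.1.conjStarAlgAut_star_eigenvectorUnitary
  rw [Unitary.conjStarAlgAut_apply, Unitary.coe_star, star_star] at hdiag
  refine ⟨hX.1.eigenvectorUnitary, ?_, ?_, fun j => √(hX.1.eigenvalues j),
    fun j => Real.sqrt_nonneg _, ?_, ?_⟩
  · simpa only [star_eq_conjTranspose, conjTranspose_eq_transpose_of_trivial] using hVV
  · simpa only [Unitary.coe_star, star_eq_conjTranspose, conjTranspose_eq_transpose_of_trivial]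
      using hVV'
  · convert hdiag using 1
    · simp only [star_eq_conjTranspose, conjTranspose_eq_transpose_of_trivial,
        transpose_mul, Matrix.mul_assoc]
    · congr 1; funext j; exact Real.sq_sqrt (hX.eigenvalues_nonneg j)
  · rw [nuclearNorm, trace_mul_cycle, hVV, one_mul, trace_diagonal]
    rfl

theorem two_mul_nuclearNorm_mul_transpose_le (C : Matrix (Fin m) (Fin p) ℝ)
    (B : Matrix (Fin n) (Fin p) ℝ) : 2 * nuclearNorm (C * Bᵀ) ≤ frobSq B + frobSq C := by
  obtain ⟨V, -, hVV', σ, -, hK, hnorm⟩ := exists_right_singular_basis (C * Bᵀ)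
  set K := C * Bᵀ * V with hKdef
  -- `σ⁻¹` is `0` wherever `σ` is, so `U` vanishes off the support of `σ`.
  set U := K * diagonal σ⁻¹
  have hU : U * Uᵀ * U = U := by
    rw [Matrix.mul_assoc, transpose_mul_self_mul_diagonal hK, Matrix.mul_assoc,
      diagonal_mul_diagonal]
    congr 2; funext j
    by_cases h : σ j = 0 <;> simp [h]
  have htrace : nuclearNorm (C * Bᵀ) = ((Cᵀ * U)ᵀ * (Bᵀ * V)).trace := by
    have hUK : (Cᵀ * U)ᵀ * (Bᵀ * V) = Uᵀ * K := by
      simp only [hKdef, transpose_mul, transpose_transpose, Matrix.mul_assoc]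
    rw [hUK, transpose_mul, Matrix.mul_assoc, hK, diagonal_transpose, diagonal_mul_diagonal,
      trace_diagonal, hnorm]
    congr 1; funext j
    rw [Pi.inv_apply, sq, ← mul_assoc, inv_mul_mul_self]
  calc 2 * nuclearNorm (C * Bᵀ) ≤ frobSq (Cᵀ * U) + frobSq (Bᵀ * V) :=
        htrace ▸ two_mul_trace_transpose_mul_le _ _
    _ ≤ frobSq C + frobSq Bᵀ := by
        rw [frobSq_mul_of_mul_transpose_eq_one _ hVV']
        exact add_le_add_left (frobSq_transpose_mul_le C hU) _
    _ = frobSq B + frobSq C := by rw [frobSq_transpose, add_comm]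

lemma exists_mul_transpose_eq_of_le_width (X : Matrix (Fin m) (Fin n) ℝ) (hp : n ≤ p) :
    ∃ (C : Matrix (Fin m) (Fin p) ℝ) (B : Matrix (Fin n) (Fin p) ℝ),
      C * Bᵀ = X ∧ frobSq B + frobSq C = 2 * nuclearNorm X := by
  obtain ⟨V, hVV, hVV', σ, hσ, hK, hnorm⟩ := exists_right_singular_basis X
  set τ : Fin n → ℝ := fun j => √(σ j)
  set E : Matrix (Fin n) (Fin p) ℝ := (1 : Matrix (Fin p) (Fin p) ℝ).submatrix (Fin.castLE hp) id
  have hE : E * Eᵀ = 1 := by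
    rw [transpose_submatrix, transpose_one, ← submatrix_mul _ _ _ _ _ Function.bijective_id,
      Matrix.mul_one]
    exact submatrix_one_embedding (Fin.castLEEmb hp)
  refine ⟨X * V * diagonal τ⁻¹ * E, V * diagonal τ * E, ?_, ?_⟩
  · have hτ : ∀ j, σ j ^ 2 ≠ 0 → (τ⁻¹ * τ) j = 1 := fun j hj => inv_mul_cancel₀ <|
      Real.sqrt_ne_zero'.2 ((hσ j).lt_of_ne' (pow_ne_zero_iff two_ne_zero |>.1 hj))
    calc X * V * diagonal τ⁻¹ * E * (V * diagonal τ * E)ᵀ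
        = X * V * diagonal (τ⁻¹ * τ) * Vᵀ := by
          simp only [transpose_mul, diagonal_transpose, Matrix.mul_assoc]
          rw [← Matrix.mul_assoc E, hE, Matrix.one_mul, ← Matrix.mul_assoc (diagonal τ⁻¹),
            diagonal_mul_diagonal]
          rfl
      _ = X := by rw [mul_diagonal_eq_self hK hτ, Matrix.mul_assoc, hVV', Matrix.mul_one]
  · rw [frobSq_mul_of_mul_transpose_eq_one _ hE, frobSq_mul_of_mul_transpose_eq_one _ hE,
      frobSq_mul_diagonal (hVV.trans diagonal_one.symm), frobSq_mul_diagonal hK, hnorm,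
      two_mul, ← Finset.sum_add_distrib, ← Finset.sum_add_distrib]
    refine Finset.sum_congr rfl fun j _ => ?_
    rw [Pi.inv_apply, inv_pow, Real.sq_sqrt (hσ j), sq, ← mul_assoc, inv_mul_mul_self, mul_one]

lemma nuclearNorm_transpose_le (X : Matrix (Fin m) (Fin n) ℝ) :
    nuclearNorm Xᵀ ≤ nuclearNorm X := by
  obtain ⟨C, B, rfl, hnorm⟩ := exists_mul_transpose_eq_of_le_width X le_rfl
  rw [transpose_mul, transpose_transpose]
  linarith [two_mul_nuclearNorm_mul_transpose_le B C]

lemma nuclearNorm_transpose (X : Matrix (Fin m) (Fin n) ℝ) : nuclearNorm Xᵀ = nuclearNorm X :=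
  (nuclearNorm_transpose_le X).antisymm (by simpa using nuclearNorm_transpose_le Xᵀ)

theorem exists_mul_transpose_eq (X : Matrix (Fin m) (Fin n) ℝ) (hp : min m n ≤ p) :
    ∃ (C : Matrix (Fin m) (Fin p) ℝ) (B : Matrix (Fin n) (Fin p) ℝ),
      C * Bᵀ = X ∧ frobSq B + frobSq C = 2 * nuclearNorm X := by
  rcases le_total n m with h | h
  · exact exists_mul_transpose_eq_of_le_width X (min_eq_right h ▸ hp)
  · obtain ⟨C, B, hCB, hnorm⟩ := exists_mul_transpose_eq_of_le_width Xᵀ (min_eq_left h ▸ hp)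
    refine ⟨B, C, ?_, ?_⟩
    · rw [← transpose_transpose X, ← hCB, transpose_mul, transpose_transpose]
    · rw [add_comm, hnorm, nuclearNorm_transpose]

end

/-- Equivalence of nuclear-norm regularized matrix completion and its bilinear
factorized form: for `P ≥ min(M, N)` and `μ ≥ 0`, the two infima coincide. -/
theorem factorized_matrix_completion_equivalence (M N P : ℕ)
    (Z W : Matrix (Fin M) (Fin N) ℝ) (μ : ℝ) (hμ : 0 ≤ μ) (hP : min M N ≤ P) :
    sInf {v : ℝ | ∃ (C : Matrix (Fin M) (Fin P) ℝ) (B : Matrix (Fin N) (Fin P) ℝ),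
        v = (1 / 2) * frobSq (Matrix.hadamard (Z - C * Bᵀ) W) +
          (μ / 2) * (frobSq B + frobSq C)} =
      sInf {v : ℝ | ∃ A : Matrix (Fin M) (Fin N) ℝ,
        v = (1 / 2) * frobSq (Matrix.hadamard (Z - A) W) + μ * nuclearNorm A} := by
  apply csInf_eq_csInf_of_forall_exists_le
  · rintro v ⟨C, B, rfl⟩
    refine ⟨_, ⟨C * Bᵀ, rfl⟩, ?_⟩
    have := mul_le_mul_of_nonneg_left (two_mul_nuclearNorm_mul_transpose_le C B) hμ
    linarith
  · rintro v ⟨A, rfl⟩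
    obtain ⟨C, B, rfl, hnorm⟩ := exists_mul_transpose_eq A hP
    exact ⟨_, ⟨C, B, rfl⟩, by rw [hnorm]; linarith⟩
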